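/- arXiv:2603.28403 — 7 statements merged into one kernel-verified Lean document; each statement's English description precedes it below -/
import Mathlib

section
/- Let A be a bounded Krein-self-adjoint operator on H that is non-negative. Then every positive real number satisfies the positive-type condition for A and every negative real number satisfies the negative-type condition for A; in particular, every spectral point of A in (0,∞) is a spectral point of positive type and every spectral point of A in (−∞,0) is a spectral point of negative type. -/
/-!
With `T = J A`, Krein-self-adjointness and non-negativity of `A` say exactly that `T` is a
positive operator on the Hilbert space, so `‖T f‖² ≤ ‖T‖ ⟪T f, f⟫` (write `T = S²` with
`S = √T`). Let `fₙ` be unit vectors with `A fₙ - λ fₙ → 0`, `λ ≠ 0`. Since `J` is unitary,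
`‖T fₙ‖ = ‖A fₙ‖ → |λ|`, while `⟪T fₙ, fₙ⟫ - λ [fₙ, fₙ] → 0`. Hence `λ [fₙ, fₙ]` is eventually
at least `λ² / (2‖T‖) > 0`, and `[fₙ, fₙ]` is bounded, which gives the sign of its
`liminf` / `limsup`.
-/

open Filter Topology

noncomputable section

variable {H : Type*} [NormedAddCommGroup H] [InnerProductSpace ℂ H] [CompleteSpace H]

/-- The indefinite (Krein) inner product `[f,g] = ⟨Jf, g⟩`. -/
def kip (J : H →L[ℂ] H) (f g : H) : ℂ := inner ℂ (J f) g

/-- Krein-self-adjoint bounded operator. -/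
def IsKSA (J A : H →L[ℂ] H) : Prop := ∀ f g, kip J (A f) g = kip J f (A g)

/-- λ satisfies the positive-type condition for `A`. -/
def PosType (J A : H →L[ℂ] H) (lam : ℝ) : Prop :=
  ∀ f : ℕ → H, (∀ n, ‖f n‖ = 1) →
    Tendsto (fun n => ‖A (f n) - (lam : ℂ) • f n‖) atTop (nhds 0) →
    0 < liminf (fun n => (kip J (f n) (f n)).re) atTop

/-- λ satisfies the negative-type condition for `A`. -/
def NegType (J A : H →L[ℂ] H) (lam : ℝ) : Prop :=
  ∀ f : ℕ → H, (∀ n, ‖f n‖ = 1) →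
    Tendsto (fun n => ‖A (f n) - (lam : ℂ) • f n‖) atTop (nhds 0) →
    limsup (fun n => (kip J (f n) (f n)).re) atTop < 0

open ContinuousLinearMap

theorem ContinuousLinearMap.IsPositive.norm_apply_sq_le {T : H →L[ℂ] H} (hT : T.IsPositive)
    (x : H) : ‖T x‖ ^ 2 ≤ ‖T‖ * RCLike.re (inner ℂ (T x) x) := by
  have hT0 : 0 ≤ T := (nonneg_iff_isPositive T).2 hT
  set S := CFC.sqrt T
  have hS : IsSelfAdjoint S := IsSelfAdjoint.of_nonneg (CFC.sqrt_nonneg T)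
  have hSS : S * S = T := CFC.sqrt_mul_sqrt_self T hT0
  have hnorm : ‖S‖ ^ 2 = ‖T‖ := by
    have := CStarRing.norm_star_mul_self (x := S)
    rw [hS.star_eq, hSS] at this
    rw [sq, this]
  have hinner : ‖S x‖ ^ 2 = RCLike.re (inner ℂ (T x) x) := by
    rw [apply_norm_sq_eq_inner_adjoint_left, ← star_eq_adjoint, hS.star_eq, ← hSS]; rfl
  calc ‖T x‖ ^ 2 = ‖S (S x)‖ ^ 2 := by rw [← hSS]; rfl
    _ ≤ (‖S‖ * ‖S x‖) ^ 2 := by gcongr; exact S.le_opNorm _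
    _ = ‖T‖ * RCLike.re (inner ℂ (T x) x) := by rw [mul_pow, hnorm, hinner]

theorem norm_apply_eq_of_isSelfAdjoint_of_comp_self {J : H →L[ℂ] H} (hJsa : IsSelfAdjoint J)
    (hJ2 : J ∘L J = 1) (x : H) : ‖J x‖ = ‖x‖ :=
  (norm_map_iff_adjoint_comp_self J).2 (by rwa [hJsa.adjoint_eq]) x

theorem isPositive_comp_of_isKSA {J A : H →L[ℂ] H} (hJsa : IsSelfAdjoint J) (hA : IsKSA J A)
    (hnn : ∀ f : H, 0 ≤ (kip J (A f) f).re) : (J ∘L A).IsPositive := by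
  refine ⟨fun x y => ?_, fun x => hnn x⟩
  calc inner ℂ (J (A x)) y = inner ℂ (J x) (A y) := hA x y
    _ = inner ℂ x (J (A y)) := hJsa.isSymmetric x (A y)

theorem exists_pos_eventually_le_mul_re_kip {J A : H →L[ℂ] H} (hJsa : IsSelfAdjoint J)
    (hJ2 : J ∘L J = 1) (hA : IsKSA J A) (hnn : ∀ f : H, 0 ≤ (kip J (A f) f).re) {lam : ℝ}
    (hlam : lam ≠ 0) {f : ℕ → H} (hf : ∀ n, ‖f n‖ = 1)
    (hconv : Tendsto (fun n => ‖A (f n) - (lam : ℂ) • f n‖) atTop (𝓝 0)) :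
    ∃ c > 0, ∀ᶠ n in atTop, c ≤ lam * (kip J (f n) (f n)).re := by
  set T := J ∘L A
  have hlam2 : 0 < lam ^ 2 := by positivity
  have hT : T.IsPositive := isPositive_comp_of_isKSA hJsa hA hnn
  have hJnorm := norm_apply_eq_of_isSelfAdjoint_of_comp_self hJsa hJ2
  set r := fun n => A (f n) - (lam : ℂ) • f n
  set defect := fun n => RCLike.re (inner ℂ (T (f n)) (f n)) - lam * (kip J (f n) (f n)).re
  have hdefect : ∀ n, ‖defect n‖ ≤ ‖r n‖ := fun n => by
    have hid : defect n = RCLike.re (inner ℂ (J (r n)) (f n)) := by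
      simp [defect, r, T, kip, Complex.mul_re]
    calc ‖defect n‖ ≤ ‖inner ℂ (J (r n)) (f n)‖ := by
          rw [hid, Real.norm_eq_abs]; exact Complex.abs_re_le_norm _
      _ ≤ ‖J (r n)‖ * ‖f n‖ := norm_inner_le_norm _ _
      _ = ‖r n‖ := by rw [hJnorm, hf, mul_one]
  have hTf : Tendsto (fun n => ‖T (f n)‖) atTop (𝓝 |lam|) := by
    refine tendsto_iff_norm_sub_tendsto_zero.2
      (squeeze_zero (fun _ => norm_nonneg _) (fun n => ?_) hconv)
    have hlamf : ‖(lam : ℂ) • f n‖ = |lam| := by simp [norm_smul, hf]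
    rw [← hlamf, show ‖T (f n)‖ = ‖A (f n)‖ from hJnorm (A (f n)), Real.norm_eq_abs]
    exact abs_norm_sub_norm_le _ _
  have hlim : Tendsto (fun n => ‖T (f n)‖ ^ 2 - ‖T‖ * defect n) atTop (𝓝 (lam ^ 2)) := by
    simpa using (hTf.pow 2).sub ((squeeze_zero_norm hdefect hconv).const_mul ‖T‖)
  have hev : ∀ᶠ n in atTop, lam ^ 2 / 2 < ‖T‖ * (lam * (kip J (f n) (f n)).re) := by
    filter_upwards [hlim.eventually (lt_mem_nhds (half_lt_self hlam2))] with n hn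
    nlinarith [hT.norm_apply_sq_le (f n)]
  obtain ⟨n, hn⟩ := hev.exists
  have hTpos : 0 < ‖T‖ := by
    by_contra! h
    exact ((half_pos hlam2).trans hn).not_ge (by rw [le_antisymm h (norm_nonneg T), zero_mul])
  refine ⟨lam ^ 2 / (2 * ‖T‖), by positivity, hev.mono fun n hn => ?_⟩
  rw [div_le_iff₀ (by positivity)]
  linarith

omit [CompleteSpace H] in
theorem abs_re_kip_self_le (J : H →L[ℂ] H) {x : H} (hx : ‖x‖ = 1) : |(kip J x x).re| ≤ ‖J‖ :=
  calc |(kip J x x).re| ≤ ‖inner ℂ (J x) x‖ := Complex.abs_re_le_norm _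
    _ ≤ ‖J x‖ * ‖x‖ := norm_inner_le_norm _ _
    _ ≤ ‖J‖ := by simpa [hx] using J.le_opNorm x

theorem posType_of_isKSA_of_nonneg {J A : H →L[ℂ] H} (hJsa : IsSelfAdjoint J)
    (hJ2 : J ∘L J = 1) (hA : IsKSA J A) (hnn : ∀ f : H, 0 ≤ (kip J (A f) f).re) {lam : ℝ}
    (hlam : 0 < lam) : PosType J A lam := by
  intro f hf hconv
  obtain ⟨c, hc, hev⟩ := exists_pos_eventually_le_mul_re_kip hJsa hJ2 hA hnn hlam.ne' hf hconv
  have hbdd : IsCoboundedUnder (· ≥ ·) atTop fun n => (kip J (f n) (f n)).re :=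
    isCoboundedUnder_ge_of_le atTop fun n => (le_abs_self _).trans (abs_re_kip_self_le J (hf n))
  refine (div_pos hc hlam).trans_le (le_liminf_of_le hbdd (hev.mono fun n hn => ?_))
  rwa [div_le_iff₀' hlam]

theorem negType_of_isKSA_of_nonneg {J A : H →L[ℂ] H} (hJsa : IsSelfAdjoint J)
    (hJ2 : J ∘L J = 1) (hA : IsKSA J A) (hnn : ∀ f : H, 0 ≤ (kip J (A f) f).re) {lam : ℝ}
    (hlam : lam < 0) : NegType J A lam := by
  intro f hf hconv
  obtain ⟨c, hc, hev⟩ := exists_pos_eventually_le_mul_re_kip hJsa hJ2 hA hnn hlam.ne hf hconv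
  have hbdd : IsCoboundedUnder (· ≤ ·) atTop fun n => (kip J (f n) (f n)).re :=
    isCoboundedUnder_le_of_le atTop fun n => neg_le_of_abs_le (abs_re_kip_self_le J (hf n))
  refine (limsup_le_of_le hbdd (hev.mono fun n hn => ?_)).trans_lt (div_neg_of_pos_of_neg hc hlam)
  rwa [le_div_iff_of_neg' hlam]

theorem stmt0 (J A : H →L[ℂ] H) (hJsa : IsSelfAdjoint J) (hJ2 : J ∘L J = 1)
    (hA : IsKSA J A) (hnn : ∀ f : H, 0 ≤ (kip J (A f) f).re) :
    (∀ lam : ℝ, 0 < lam → PosType J A lam) ∧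
    (∀ lam : ℝ, lam < 0 → NegType J A lam) ∧
    (∀ lam : ℝ, (lam : ℂ) ∈ spectrum ℂ A → 0 < lam → PosType J A lam) ∧
    (∀ lam : ℝ, (lam : ℂ) ∈ spectrum ℂ A → lam < 0 → NegType J A lam) := by
  have hpos : ∀ lam : ℝ, 0 < lam → PosType J A lam := fun _ hlam =>
    posType_of_isKSA_of_nonneg hJsa hJ2 hA hnn hlam
  have hneg : ∀ lam : ℝ, lam < 0 → NegType J A lam := fun _ hlam =>
    negType_of_isKSA_of_nonneg hJsa hJ2 hA hnn hlam
  exact ⟨hpos, hneg, fun lam _ => hpos lam, fun lam _ => hneg lam⟩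
end
end

section
/- Let A be a bounded Krein-self-adjoint operator on H that is non-negative. Then the spectrum of A is contained in the real axis: σ(A) ⊆ ℝ. -/
open Filter Topology

noncomputable section

variable {H : Type*} [NormedAddCommGroup H] [InnerProductSpace ℂ H] [CompleteSpace H]

/-!
Since `J² = 1`, the operator `A` factors as `J T` with `T = J A`, and Krein-self-adjointness and
non-negativity of `A` say exactly that `T` is a positive operator on the Hilbert space. Writing
`T = s²` with `s = √T ≥ 0`, the products `(J s) s` and `s (J s)` have the same nonzero spectrum,
and `s J s` is self-adjoint, so its spectrum is real.
-/

theorem IsSelfAdjoint.im_eq_zero_of_mem_spectrum_mul_nonneg {𝒜 : Type*} [CStarAlgebra 𝒜]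
    [PartialOrder 𝒜] [StarOrderedRing 𝒜] {b t : 𝒜} (hb : IsSelfAdjoint b) (ht : 0 ≤ t)
    {z : ℂ} (hz : z ∈ spectrum ℂ (b * t)) : z.im = 0 := by
  rcases eq_or_ne z 0 with rfl | hz0
  · rfl
  set s := CFC.sqrt t
  have hs : IsSelfAdjoint s := (CFC.sqrt_nonneg t).isSelfAdjoint
  have hmem : z ∈ spectrum ℂ (s * (b * s)) \ {0} := by
    rw [← spectrum.nonzero_mul_comm, mul_assoc, CFC.sqrt_mul_sqrt_self t]
    exact ⟨hz, hz0⟩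
  have hsbs : IsSelfAdjoint (s * (b * s)) := by
    simpa only [mul_assoc] using hb.conjugate_self hs
  rw [hsbs.mem_spectrum_eq_re hmem.1, Complex.ofReal_im]

theorem IsKSA.nonneg_mul {J A : H →L[ℂ] H} (hJ : IsSelfAdjoint J) (hA : IsKSA J A)
    (hnn : ∀ f : H, 0 ≤ (kip J (A f) f).re) : 0 ≤ J * A := by
  rw [ContinuousLinearMap.nonneg_iff_isPositive]
  refine ⟨fun f g => ?_, hnn⟩
  calc inner ℂ (J (A f)) g = inner ℂ (J f) (A g) := hA f g
    _ = inner ℂ f (J (A g)) := ContinuousLinearMap.isSelfAdjoint_iff_isSymmetric.mp hJ f (A g)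

theorem stmt1 (J A : H →L[ℂ] H) (hJsa : IsSelfAdjoint J) (hJ2 : J ∘L J = 1)
    (hA : IsKSA J A) (hnn : ∀ f : H, 0 ≤ (kip J (A f) f).re) :
    ∀ z ∈ spectrum ℂ A, z.im = 0 := by
  intro z hz
  have hJJ : J * J = 1 := hJ2
  rw [← one_mul A, ← hJJ, mul_assoc] at hz
  exact hJsa.im_eq_zero_of_mem_spectrum_mul_nonneg (hA.nonneg_mul hJsa hnn) hz
end
end

section
/- Let A be a bounded Krein-self-adjoint operator on H that is non-negative. Then for every λ ∈ ℂ with Im λ ≠ 0 the operator A − λ·id is boundedly invertible and ‖(A − λ)⁻¹‖ ≤ ‖J ∘ A‖ / |Im λ|² + 1 / |Im λ|. -/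
open Filter Topology

noncomputable section

variable {H : Type*} [NormedAddCommGroup H] [InnerProductSpace ℂ H] [CompleteSpace H]

open ComplexInnerProductSpace

/-!
With `S = √(J A) ≥ 0` one has `A = (J S) S`, while `S (J S)` is self-adjoint, so its resolvent at
a non-real `λ` has norm at most `1 / |Im λ|`. The resolvent of `u v` is recovered from that of
`v u` by `(u v - λ)⁻¹ = λ⁻¹ (u (v u - λ)⁻¹ v - 1)`, and `‖J S‖ ‖S‖ = ‖S‖ ^ 2 = ‖J A‖` because `J` is
unitary.
-/

section Ring

variable {R : Type*} [Ring R] {u v r c : R}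

theorem Commute.mul_sub_mul_inverse_left (hu : Commute c u) (h : (v * u - c) * r = 1) :
    (u * v - c) * (u * r * v - 1) = c := by
  calc (u * v - c) * (u * r * v - 1)
      = u * ((v * u - c) * r) * v - u * v + (u * c - c * u) * r * v + c := by noncomm_ring
    _ = c := by rw [h, hu.eq]; noncomm_ring

theorem Commute.mul_sub_mul_inverse_right (hv : Commute c v) (h : r * (v * u - c) = 1) :
    (u * r * v - 1) * (u * v - c) = c := by
  calc (u * r * v - 1) * (u * v - c)
      = u * (r * (v * u - c)) * v - u * v + u * r * (c * v - v * c) + c := by noncomm_ring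
    _ = c := by rw [h, hv.eq]; noncomm_ring

end Ring

theorem exists_inverse_mul_sub_smul_one_of_swap {𝕜 R : Type*} [NormedField 𝕜] [NormedRing R]
    [NormedAlgebra 𝕜 R] {u v r : R} {lam : 𝕜} (hlam : lam ≠ 0)
    (h₁ : (v * u - lam • 1) * r = 1) (h₂ : r * (v * u - lam • 1) = 1) :
    ∃ B : R, (u * v - lam • 1) * B = 1 ∧ B * (u * v - lam • 1) = 1 ∧
      ‖B‖ ≤ ‖lam‖⁻¹ * (‖u‖ * ‖r‖ * ‖v‖ + ‖(1 : R)‖) := by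
  have hc : ∀ x : R, Commute (lam • 1) x := fun x ↦ (Commute.one_left x).smul_left lam
  refine ⟨lam⁻¹ • (u * r * v - 1), ?_, ?_, ?_⟩
  · rw [mul_smul_comm, (hc u).mul_sub_mul_inverse_left h₁, smul_smul, inv_mul_cancel₀ hlam,
      one_smul]
  · rw [smul_mul_assoc, (hc v).mul_sub_mul_inverse_right h₂, smul_smul, inv_mul_cancel₀ hlam,
      one_smul]
  · calc ‖lam⁻¹ • (u * r * v - 1)‖ ≤ ‖lam⁻¹‖ * (‖u * r * v‖ + ‖(1 : R)‖) :=
          (norm_smul_le _ _).trans (by gcongr; exact norm_sub_le _ _)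
      _ ≤ ‖lam‖⁻¹ * (‖u‖ * ‖r‖ * ‖v‖ + ‖(1 : R)‖) := by
          rw [norm_inv]; gcongr; exact norm_mul₃_le

section InnerProduct

variable {E : Type*} [NormedAddCommGroup E] [InnerProductSpace ℂ E]

theorem LinearMap.IsSymmetric.norm_sq_mul_abs_im_le {M : E →L[ℂ] E}
    (hM : (M : E →ₗ[ℂ] E).IsSymmetric) (lam : ℂ) (x : E) :
    ‖x‖ ^ 2 * |lam.im| ≤ ‖⟪(M - lam • 1) x, x⟫‖ := by
  have hMx : (⟪M x, x⟫).im = 0 := hM.im_inner_apply_self x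
  have him : (⟪(M - lam • 1) x, x⟫).im = ‖x‖ ^ 2 * lam.im := by
    simp [hMx, ← Complex.ofReal_pow]
  calc ‖x‖ ^ 2 * |lam.im| = |(⟪(M - lam • 1) x, x⟫).im| := by
        rw [him, abs_mul, abs_sq]
    _ ≤ ‖⟪(M - lam • 1) x, x⟫‖ := Complex.abs_im_le_norm _

theorem IsSelfAdjoint.exists_inverse_sub_smul_one [CompleteSpace E] {M : E →L[ℂ] E}
    (hM : IsSelfAdjoint M) {lam : ℂ} (hlam : lam.im ≠ 0) :
    ∃ r : E →L[ℂ] E, (M - lam • 1) * r = 1 ∧ r * (M - lam • 1) = 1 ∧ ‖r‖ ≤ |lam.im|⁻¹ := by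
  set c : NNReal := ⟨|lam.im|, abs_nonneg _⟩
  have hc : 0 < c := abs_pos.mpr hlam
  have hcoercive := hM.isSymmetric.norm_sq_mul_abs_im_le lam
  obtain ⟨e, he⟩ := ContinuousLinearMap.isUnit_of_forall_le_norm_inner_map _ hc hcoercive
  refine ⟨↑e⁻¹, he ▸ e.mul_inv, he ▸ e.inv_mul,
    ContinuousLinearMap.opNorm_le_bound _ (by positivity) fun x ↦ ?_⟩
  have hanti :=
    (ContinuousLinearMap.antilipschitz_of_forall_le_inner_map _ hc hcoercive).le_mul_norm
      (map_zero _) ((↑e⁻¹ : E →L[ℂ] E) x)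
  have hx : (M - lam • 1) ((↑e⁻¹ : E →L[ℂ] E) x) = x := he ▸ DFunLike.congr_fun e.mul_inv x
  rwa [hx] at hanti

end InnerProduct

theorem nonneg_comp_of_isKSA {J A : H →L[ℂ] H} (hJ : IsSelfAdjoint J) (hA : IsKSA J A)
    (hnn : ∀ f : H, 0 ≤ (kip J (A f) f).re) : 0 ≤ J ∘L A := by
  rw [ContinuousLinearMap.nonneg_iff_isPositive]
  exact ⟨fun f g ↦ (hA f g).trans (hJ.isSymmetric f (A g)), hnn⟩

theorem stmt2 (J A : H →L[ℂ] H) (hJsa : IsSelfAdjoint J) (hJ2 : J ∘L J = 1)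
    (hA : IsKSA J A) (hnn : ∀ f : H, 0 ≤ (kip J (A f) f).re) :
    ∀ lam : ℂ, lam.im ≠ 0 →
      ∃ B : H →L[ℂ] H, (A - lam • 1) ∘L B = 1 ∧ B ∘L (A - lam • 1) = 1 ∧
        ‖B‖ ≤ ‖J ∘L A‖ / |lam.im| ^ 2 + 1 / |lam.im| := by
  intro lam hlam
  have hJJ : J * J = 1 := hJ2
  have hT : 0 ≤ J ∘L A := nonneg_comp_of_isKSA hJsa hA hnn
  set S := CFC.sqrt (J ∘L A)
  have hS : IsSelfAdjoint S := IsSelfAdjoint.of_nonneg (CFC.sqrt_nonneg _)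
  have hA_eq : J * S * S = A := by
    rw [mul_assoc, CFC.sqrt_mul_sqrt_self _ hT]
    change J * (J * A) = A
    rw [← mul_assoc, hJJ, one_mul]
  have hJS : ‖J * S‖ = ‖S‖ :=
    CStarRing.norm_coe_unitary_mul ⟨J, by rw [Unitary.mem_iff, hJsa.star_eq]; exact ⟨hJJ, hJJ⟩⟩ S
  have hSS : ‖S‖ * ‖S‖ = ‖J ∘L A‖ := by
    rw [← CStarRing.norm_self_mul_star, hS.star_eq, CFC.sqrt_mul_sqrt_self _ hT]
  obtain ⟨r, hr₁, hr₂, hr⟩ :=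
    (by simpa only [mul_assoc] using hJsa.conjugate_self hS :
      IsSelfAdjoint (S * (J * S))).exists_inverse_sub_smul_one hlam
  obtain ⟨B, hB₁, hB₂, hB⟩ := exists_inverse_mul_sub_smul_one_of_swap
    (fun h ↦ hlam (by simp [h])) hr₁ hr₂
  rw [hA_eq] at hB₁ hB₂
  have hβ : 0 < |lam.im| := abs_pos.mpr hlam
  refine ⟨B, hB₁, hB₂, hB.trans ?_⟩
  calc ‖lam‖⁻¹ * (‖J * S‖ * ‖r‖ * ‖S‖ + ‖(1 : H →L[ℂ] H)‖)
      ≤ |lam.im|⁻¹ * (‖S‖ * |lam.im|⁻¹ * ‖S‖ + 1) := by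
        rw [hJS]
        gcongr
        · exact Complex.abs_im_le_norm lam
        · exact ContinuousLinearMap.norm_id_le
    _ = ‖J ∘L A‖ / |lam.im| ^ 2 + 1 / |lam.im| := by
        rw [← hSS]
        field_simp
end
end

section
/- Let A be a bounded linear operator on the complex Hilbert space H and suppose there exist constants M > 0 and ε > 0 such that for every η ∈ (0, ε) the operator A − iη·id is boundedly invertible with ‖(A − iη)⁻¹‖ ≤ M/η². Then ker(A³) = ker(A²). (That is, if the growth of the resolvent of A at 0 is of order 2, then the algebraic eigenspace of A at 0 equals ker A².) -/
open Filter Topology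

noncomputable section

/-!
If `A³ f = 0`, then `(A - z)(A² f + z A f + z² f) = -z³ f`, so applying the resolvent
`R(z) = (A - z)⁻¹` gives `A² f = -z³ R(z) f - z² f - z A f`. On `z = iη` the resolvent bound
`‖R(iη)‖ ≤ M / η²` makes the right-hand side `O(η)`, and letting `η → 0⁺` forces `A² f = 0`.
-/

section

variable {𝕜 E : Type*} [NontriviallyNormedField 𝕜] [NormedAddCommGroup E] [NormedSpace 𝕜 E]

theorem sq_apply_eq_of_comp_sub_smul_eq_one {A B : E →L[𝕜] E} {z : 𝕜}
    (hBA : B ∘L (A - z • 1) = 1) {f : E} (h3 : A (A (A f)) = 0) :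
    A (A f) = -(z ^ 3 • B f + z ^ 2 • f + z • A f) := by
  have hfactor : (A - z • 1) (A (A f) + z • A f + z ^ 2 • f) = -(z ^ 3 • f) := by
    simp only [sub_apply, smul_apply, one_apply_eq_self, map_add, map_smul, h3]
    module
  have hB := congrArg B hfactor
  rw [← ContinuousLinearMap.comp_apply, hBA, one_apply_eq_self, map_neg, map_smul] at hB
  linear_combination (norm := module) hB

theorem norm_sq_apply_le_of_comp_sub_smul_eq_one {A B : E →L[𝕜] E} {z : 𝕜} (hz : z ≠ 0)
    (hBA : B ∘L (A - z • 1) = 1) {M : ℝ} (hB : ‖B‖ ≤ M / ‖z‖ ^ 2) {f : E}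
    (h3 : A (A (A f)) = 0) :
    ‖A (A f)‖ ≤ ‖z‖ * (M * ‖f‖ + ‖z‖ * ‖f‖ + ‖A f‖) := by
  have hz' : 0 < ‖z‖ := norm_pos_iff.mpr hz
  have hBf : ‖z‖ ^ 3 * ‖B f‖ ≤ ‖z‖ * (M * ‖f‖) :=
    calc ‖z‖ ^ 3 * ‖B f‖ ≤ ‖z‖ ^ 3 * (M / ‖z‖ ^ 2 * ‖f‖) := by
          gcongr; exact B.le_of_opNorm_le hB f
      _ = ‖z‖ * (M * ‖f‖) := by field_simp
  calc ‖A (A f)‖ = ‖z ^ 3 • B f + z ^ 2 • f + z • A f‖ := by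
        rw [sq_apply_eq_of_comp_sub_smul_eq_one hBA h3, norm_neg]
    _ ≤ ‖z‖ ^ 3 * ‖B f‖ + ‖z‖ ^ 2 * ‖f‖ + ‖z‖ * ‖A f‖ := by
        refine (norm_add₃_le).trans_eq ?_
        simp only [norm_smul, norm_pow]
    _ ≤ ‖z‖ * (M * ‖f‖ + ‖z‖ * ‖f‖ + ‖A f‖) := by linarith

end

theorem stmt4_general {H : Type*} [NormedAddCommGroup H] [InnerProductSpace ℂ H]
    (A : H →L[ℂ] H) (M ε : ℝ) (hε : 0 < ε)
    (hres : ∀ η : ℝ, η ∈ Set.Ioo 0 ε →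
      ∃ B : H →L[ℂ] H, (A - ((η : ℂ) * Complex.I) • 1) ∘L B = 1 ∧
        B ∘L (A - ((η : ℂ) * Complex.I) • 1) = 1 ∧ ‖B‖ ≤ M / η ^ 2) :
    ∀ f : H, A (A (A f)) = 0 ↔ A (A f) = 0 := by
  intro f
  refine ⟨fun h3 => ?_, fun h2 => by simp [h2]⟩
  set g : ℝ → ℝ := fun η => η * (M * ‖f‖ + η * ‖f‖ + ‖A f‖)
  have hbound : ∀ᶠ η in 𝓝[>] 0, ‖A (A f)‖ ≤ g η := by
    filter_upwards [Ioo_mem_nhdsGT hε] with η hη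
    obtain ⟨B, -, hBA, hB⟩ := hres η hη
    have hnorm : ‖(η : ℂ) * Complex.I‖ = η := by simp [abs_of_pos hη.1]
    have hz : (η : ℂ) * Complex.I ≠ 0 := by simpa [hnorm] using hη.1.ne'
    simpa only [hnorm] using
      norm_sq_apply_le_of_comp_sub_smul_eq_one hz hBA (by rwa [hnorm]) h3
  have hg : Tendsto g (𝓝[>] 0) (𝓝 0) := by
    refine tendsto_nhdsWithin_of_tendsto_nhds ?_
    simpa [g] using (Continuous.tendsto (by fun_prop : Continuous g) 0)
  exact norm_le_zero_iff.mp (le_of_tendsto_of_tendsto tendsto_const_nhds hg hbound)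

theorem stmt4 {H : Type*} [NormedAddCommGroup H] [InnerProductSpace ℂ H] [CompleteSpace H]
    (A : H →L[ℂ] H) (M ε : ℝ) (hM : 0 < M) (hε : 0 < ε)
    (hres : ∀ η : ℝ, η ∈ Set.Ioo 0 ε →
      ∃ B : H →L[ℂ] H, (A - ((η : ℂ) * Complex.I) • 1) ∘L B = 1 ∧
        B ∘L (A - ((η : ℂ) * Complex.I) • 1) = 1 ∧ ‖B‖ ≤ M / η ^ 2) :
    ∀ f : H, A (A (A f)) = 0 ↔ A (A f) = 0 :=
  stmt4_general A M ε hε hres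
end
end

section
/- Let A be a bounded Krein-self-adjoint operator on H such that: (i) every real λ > 0 satisfies the positive-type condition for A and every real λ < 0 satisfies the negative-type condition for A; and (ii) A is similar to a self-adjoint operator in a Hilbert space, i.e., there exists a bounded operator W on H with bounded inverse such that W ∘ A ∘ W⁻¹ is self-adjoint with respect to ⟨·,·⟩. Then A is non-negative, i.e., [A f, f] ≥ 0 for all f ∈ H, and moreover ker A² = ker A. -/
open Filter Topology

noncomputable section

variable {H : Type*} [NormedAddCommGroup H] [InnerProductSpace ℂ H] [CompleteSpace H]

/-!
Conjugation by `W` turns `A` into the self-adjoint operator `S = W A W⁻¹` and the Krein form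
into the Gram operator `G = W⁻¹* J W⁻¹`, which is self-adjoint, invertible and commutes with `S`;
moreover `[A f, f] = ⟨G S W f, W f⟩`. Writing `G = R² - R'²` with `R = √G⁺`, `R' = √G⁻` (both
commuting with `S`), it suffices that `S` is non-negative on the range of the spectral projection
`P` of `G` for `(0, ∞)`, and symmetrically for `-S, -G`. If `S` took a negative value on `ran P`,
the bottom `m < 0` of its numerical range there would be an approximate eigenvalue of `S` with
approximate eigenvectors in `ran P`, where `G ≥ 0`; pulled back by `W⁻¹` they are approximate
eigenvectors of `A` at `m` with `[f, f] ≥ 0`, against the negative type of `m`.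
The kernel identity is `ker S² = ker S` for self-adjoint `S`, transported by `W`.
-/

open ContinuousLinearMap

section

variable {E : Type*} [NormedAddCommGroup E] [InnerProductSpace ℂ E]

def IsApproxEigenseq (T : E →L[ℂ] E) (μ : ℝ) (f : ℕ → E) : Prop :=
  (∀ n, ‖f n‖ = 1) ∧ Tendsto (fun n => ‖T (f n) - (μ : ℂ) • f n‖) atTop (𝓝 0)

lemma isApproxEigenseq_neg_iff {T : E →L[ℂ] E} {μ : ℝ} {f : ℕ → E} :
    IsApproxEigenseq (-T) μ f ↔ IsApproxEigenseq T (-μ) f := by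
  have h : ∀ n, ‖(-T) (f n) - (μ : ℂ) • f n‖ = ‖T (f n) - ((-μ : ℝ) : ℂ) • f n‖ := fun n => by
    rw [← norm_neg]
    congr 1
    push_cast
    rw [Pi.neg_apply]
    module
  simp only [IsApproxEigenseq, h]

lemma IsApproxEigenseq.of_normalize {T : E →L[ℂ] E} {μ : ℝ} {u : ℕ → E} {c : ℝ} (hc : 0 < c)
    (hu : ∀ n, c ≤ ‖u n‖) (hT : Tendsto (fun n => ‖T (u n) - (μ : ℂ) • u n‖) atTop (𝓝 0)) :
    IsApproxEigenseq T μ fun n => (‖u n‖⁻¹ : ℂ) • u n := by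
  refine ⟨fun n => norm_smul_inv_norm (norm_pos_iff.mp (hc.trans_le (hu n))), ?_⟩
  refine squeeze_zero (fun n => norm_nonneg _) (fun n => ?_) (by simpa using hT.const_mul c⁻¹)
  calc ‖T ((‖u n‖⁻¹ : ℂ) • u n) - (μ : ℂ) • (‖u n‖⁻¹ : ℂ) • u n‖
      = ‖u n‖⁻¹ * ‖T (u n) - (μ : ℂ) • u n‖ := by
        rw [map_smul, smul_comm, ← smul_sub, norm_smul, norm_inv, Complex.norm_real, norm_norm]
    _ ≤ c⁻¹ * ‖T (u n) - (μ : ℂ) • u n‖ := by gcongr; exact hu n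

lemma IsApproxEigenseq.of_conj {A W Winv : E →L[ℂ] E} (hWV : W ∘L Winv = 1)
    (hVW : Winv ∘L W = 1) {μ : ℝ} {w : ℕ → E} (hw : IsApproxEigenseq (W ∘L A ∘L Winv) μ w) :
    IsApproxEigenseq A μ fun n => (‖Winv (w n)‖⁻¹ : ℂ) • Winv (w n) := by
  have hWV' (x : E) : W (Winv x) = x := congr($hWV x)
  have hVW' (x : E) : Winv (W x) = x := congr($hVW x)
  refine .of_normalize (c := (‖W‖ + 1)⁻¹) (by positivity) (fun n => ?_) ?_
  · rw [inv_le_iff_one_le_mul₀' (by positivity)]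
    calc (1 : ℝ) = ‖W (Winv (w n))‖ := by rw [hWV', hw.1 n]
      _ ≤ ‖W‖ * ‖Winv (w n)‖ := W.le_opNorm _
      _ ≤ (‖W‖ + 1) * ‖Winv (w n)‖ := by gcongr; linarith
  · refine squeeze_zero (fun n => norm_nonneg _) (fun n => ?_)
      (by simpa using hw.2.const_mul ‖Winv‖)
    calc ‖A (Winv (w n)) - (μ : ℂ) • Winv (w n)‖
        = ‖Winv ((W ∘L A ∘L Winv) (w n) - (μ : ℂ) • w n)‖ := by
          rw [map_sub, map_smul, comp_apply, comp_apply, hVW']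
      _ ≤ ‖Winv‖ * ‖(W ∘L A ∘L Winv) (w n) - (μ : ℂ) • w n‖ := Winv.le_opNorm _

lemma abs_reApplyInnerSelf_le (T : E →L[ℂ] E) (x : E) :
    |T.reApplyInnerSelf x| ≤ ‖T‖ * ‖x‖ ^ 2 := by
  calc |T.reApplyInnerSelf x| ≤ ‖inner ℂ (T x) x‖ := RCLike.abs_re_le_norm _
    _ ≤ ‖T x‖ * ‖x‖ := norm_inner_le_norm _ _
    _ ≤ ‖T‖ * ‖x‖ * ‖x‖ := by gcongr; exact T.le_opNorm x
    _ = ‖T‖ * ‖x‖ ^ 2 := by ring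

lemma reApplyInnerSelf_sub (T U : E →L[ℂ] E) (x : E) :
    (T - U).reApplyInnerSelf x = T.reApplyInnerSelf x - U.reApplyInnerSelf x := by
  simp only [reApplyInnerSelf_apply, sub_apply, inner_sub_left, map_sub]

lemma reApplyInnerSelf_neg (T : E →L[ℂ] E) (x : E) :
    (-T).reApplyInnerSelf x = -T.reApplyInnerSelf x := by
  simp only [reApplyInnerSelf_apply, neg_apply, inner_neg_left, map_neg]

lemma reApplyInnerSelf_sub_smul_one (S : E →L[ℂ] E) (m : ℝ) (z : E) :
    (S - (m : ℂ) • 1).reApplyInnerSelf z = S.reApplyInnerSelf z - m * ‖z‖ ^ 2 := by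
  rw [reApplyInnerSelf_apply, reApplyInnerSelf_apply, sub_apply, smul_apply, one_apply_eq_self,
    inner_sub_left, map_sub, inner_smul_left, ← inner_self_eq_norm_sq (𝕜 := ℂ),
    Complex.conj_ofReal, RCLike.re_to_complex, RCLike.re_to_complex, RCLike.re_to_complex,
    Complex.re_ofReal_mul]

def numericalInfOn (S P : E →L[ℂ] E) : ℝ :=
  sInf (S.reApplyInnerSelf '' {x | ‖x‖ = 1 ∧ P x = x})

lemma bddBelow_reApplyInnerSelf_image_unit (S : E →L[ℂ] E) (s : Set E) (hs : ∀ x ∈ s, ‖x‖ = 1) :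
    BddBelow (S.reApplyInnerSelf '' s) := by
  refine ⟨-‖S‖, ?_⟩
  rintro _ ⟨x, hx, rfl⟩
  have h := abs_reApplyInnerSelf_le S x
  rw [hs x hx, one_pow, mul_one] at h
  exact neg_le_of_abs_le h

lemma numericalInfOn_mul_sq_le (S P : E →L[ℂ] E) {y : E} (hy : P y = y) :
    numericalInfOn S P * ‖y‖ ^ 2 ≤ S.reApplyInnerSelf y := by
  rcases eq_or_ne y 0 with rfl | hy0
  · simp [reApplyInnerSelf_apply]
  have hmem : (‖y‖⁻¹ : ℂ) • y ∈ {x | ‖x‖ = 1 ∧ P x = x} :=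
    ⟨norm_smul_inv_norm hy0, by rw [map_smul, hy]⟩
  have h := csInf_le (bddBelow_reApplyInnerSelf_image_unit S _ fun x hx => hx.1)
    (Set.mem_image_of_mem _ hmem)
  rw [reApplyInnerSelf_smul, norm_inv, Complex.norm_real, norm_norm, inv_pow, inv_mul_eq_div,
    le_div_iff₀ (by positivity)] at h
  exact h

lemma re_kip_self (J : E →L[ℂ] E) (x : E) : (kip J x x).re = J.reApplyInnerSelf x := rfl

lemma abs_re_kip_self_le_s7 {J : E →L[ℂ] E} {f : ℕ → E} (hf : ∀ n, ‖f n‖ = 1) (n : ℕ) :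
    |(kip J (f n) (f n)).re| ≤ ‖J‖ := by
  simpa [re_kip_self, hf n] using abs_reApplyInnerSelf_le J (f n)

lemma PosType.eventually_pos {J A : E →L[ℂ] E} {μ : ℝ} (h : PosType J A μ) {f : ℕ → E}
    (hf : IsApproxEigenseq A μ f) : ∀ᶠ n in atTop, 0 < J.reApplyInnerSelf (f n) :=
  eventually_lt_of_lt_liminf (h f hf.1 hf.2)
    (isBoundedUnder_of ⟨-‖J‖, fun n => (abs_le.mp (abs_re_kip_self_le_s7 hf.1 n)).1⟩)

lemma NegType.eventually_neg {J A : E →L[ℂ] E} {μ : ℝ} (h : NegType J A μ) {f : ℕ → E}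
    (hf : IsApproxEigenseq A μ f) : ∀ᶠ n in atTop, J.reApplyInnerSelf (f n) < 0 :=
  eventually_lt_of_limsup_lt (h f hf.1 hf.2)
    (isBoundedUnder_of ⟨‖J‖, fun n => (abs_le.mp (abs_re_kip_self_le_s7 hf.1 n)).2⟩)

end

lemma reApplyInnerSelf_star_mul_mul (T V : H →L[ℂ] H) (y : H) :
    (star V * T * V).reApplyInnerSelf y = T.reApplyInnerSelf (V y) := by
  simp only [reApplyInnerSelf_apply, mul_apply_eq_comp, star_eq_adjoint,
    adjoint_inner_left]

lemma norm_apply_sq_le_of_nonneg {B : H →L[ℂ] H} (hB : 0 ≤ B) (x : H) :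
    ‖B x‖ ^ 2 ≤ ‖B‖ * B.reApplyInnerSelf x := by
  set C := CFC.sqrt B
  have hCC : C * C = B := CFC.sqrt_mul_sqrt_self B hB
  have hC : IsSelfAdjoint C := (CFC.sqrt_nonneg B).isSelfAdjoint
  have hBC : B = star C * 1 * C := by rw [mul_one, hC.star_eq, hCC]
  have hnormC : ‖C‖ ^ 2 = ‖B‖ := by
    rw [hBC, mul_one, CStarRing.norm_star_mul_self, sq]
  have hCx : ‖C x‖ ^ 2 = B.reApplyInnerSelf x := by
    rw [hBC, reApplyInnerSelf_star_mul_mul, reApplyInnerSelf_apply, one_apply_eq_self,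
      inner_self_eq_norm_sq]
  calc ‖B x‖ ^ 2 = ‖C (C x)‖ ^ 2 := by rw [← hCC, mul_apply_eq_comp]
    _ ≤ (‖C‖ * ‖C x‖) ^ 2 := by gcongr; exact C.le_opNorm _
    _ = ‖B‖ * B.reApplyInnerSelf x := by rw [mul_pow, hnormC, hCx]

section Compression

variable {S P : H →L[ℂ] H}

lemma isApproxEigenseq_numericalInfOn (hS : IsSelfAdjoint S) (hP : IsStarProjection P)
    (hSP : Commute S P) {v : ℕ → H} (hv : ∀ n, ‖v n‖ = 1 ∧ P (v n) = v n)
    (hlim : Tendsto (fun n => S.reApplyInnerSelf (v n)) atTop (𝓝 (numericalInfOn S P))) :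
    IsApproxEigenseq S (numericalInfOn S P) v := by
  -- `B` is positive by minimality of `m`, and `‖B v‖² ≤ ‖B‖ ⟨B v, v⟩ → 0`.
  set m := numericalInfOn S P
  set B := star P * (S - (m : ℂ) • 1) * P
  have hre (y : H) : B.reApplyInnerSelf y = S.reApplyInnerSelf (P y) - m * ‖P y‖ ^ 2 := by
    rw [reApplyInnerSelf_star_mul_mul, reApplyInnerSelf_sub_smul_one]
  have hPP (y : H) : P (P y) = P y := by rw [← mul_apply_eq_comp, hP.isIdempotentElem.eq]
  have hsmul : IsSelfAdjoint ((m : ℂ) • (1 : H →L[ℂ] H)) := by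
    rw [IsSelfAdjoint, star_smul, star_one, Complex.star_def, Complex.conj_ofReal]
  have hB : 0 ≤ B := by
    rw [nonneg_iff_isPositive, isPositive_def']
    refine ⟨(hS.sub hsmul).conjugate' P, fun y => ?_⟩
    rw [hre, sub_nonneg]
    exact numericalInfOn_mul_sq_le S P (hPP y)
  have hBv (n : ℕ) : B (v n) = S (v n) - (m : ℂ) • v n := by
    have hSPv : P (S (v n)) = S (v n) := by
      rw [← mul_apply_eq_comp, ← hSP.eq, mul_apply_eq_comp, (hv n).2]
    simp only [B, hP.isSelfAdjoint.star_eq, mul_apply_eq_comp, sub_apply, smul_apply,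
      one_apply_eq_self, (hv n).2, map_sub, map_smul, hSPv]
  refine ⟨fun n => (hv n).1, ?_⟩
  simp_rw [← hBv]
  have hreB : Tendsto (fun n => B.reApplyInnerSelf (v n)) atTop (𝓝 0) := by
    simpa [hre, (hv _).1, (hv _).2] using hlim.sub_const m
  refine squeeze_zero (fun n => norm_nonneg _) (g := fun n => √(‖B‖ * B.reApplyInnerSelf (v n)))
    (fun n => Real.le_sqrt_of_sq_le (norm_apply_sq_le_of_nonneg hB _)) ?_
  simpa using (hreB.const_mul ‖B‖).sqrt

lemma exists_isApproxEigenseq_neg (hS : IsSelfAdjoint S) (hP : IsStarProjection P)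
    (hSP : Commute S P) {x : H} (hx : P x = x) (hneg : S.reApplyInnerSelf x < 0) :
    ∃ m < 0, ∃ w : ℕ → H, IsApproxEigenseq S m w ∧ ∀ n, P (w n) = w n := by
  have hx0 : x ≠ 0 := by rintro rfl; simp [reApplyInnerSelf_apply] at hneg
  have hne : (S.reApplyInnerSelf '' {x | ‖x‖ = 1 ∧ P x = x}).Nonempty :=
    ⟨_, _, ⟨norm_smul_inv_norm (𝕜 := ℂ) hx0, by rw [map_smul, hx]⟩, rfl⟩
  obtain ⟨u, -, hlim, hmem⟩ :=
    exists_seq_tendsto_sInf hne (bddBelow_reApplyInnerSelf_image_unit S _ fun x hx => hx.1)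
  choose v hv hSv using hmem
  rw [show u = fun n => S.reApplyInnerSelf (v n) from funext fun n => (hSv n).symm] at hlim
  refine ⟨numericalInfOn S P, ?_, v, isApproxEigenseq_numericalInfOn hS hP hSP hv hlim,
    fun n => (hv n).2⟩
  exact neg_of_mul_neg_left ((numericalInfOn_mul_sq_le S P hx).trans_lt hneg) (by positivity)

end Compression

lemma continuousOn_ite_pos_spectrum {A : Type*} [Ring A] [Algebra ℝ A] {a : A} (ha : IsUnit a) :
    ContinuousOn (fun t : ℝ => if 0 < t then (1 : ℝ) else 0) (spectrum ℝ a) := by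
  refine ContinuousOn.if (fun t ht => ?_) continuousOn_const continuousOn_const
  rw [show {t : ℝ | 0 < t} = Set.Ioi 0 from rfl, frontier_Ioi] at ht
  exact absurd (ht.2 ▸ ht.1) (spectrum.zero_notMem ℝ ha)

section SpectralProjection

def posSpectralProj (G : H →L[ℂ] H) : H →L[ℂ] H :=
  cfc (fun t : ℝ => if 0 < t then (1 : ℝ) else 0) G

variable {G : H →L[ℂ] H}

lemma isStarProjection_posSpectralProj (hGu : IsUnit G) :
    IsStarProjection (posSpectralProj G) where
  isIdempotentElem := by
    have hc := continuousOn_ite_pos_spectrum hGu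
    rw [IsIdempotentElem, posSpectralProj, ← cfc_mul _ _ G hc hc]
    refine cfc_congr fun t _ => ?_
    split_ifs <;> simp
  isSelfAdjoint := cfc_predicate _ _

lemma posSpectralProj_mul_cfc_sqrt (hGu : IsUnit G) :
    posSpectralProj G * cfc Real.sqrt G = cfc Real.sqrt G := by
  rw [posSpectralProj, ← cfc_mul _ _ G (continuousOn_ite_pos_spectrum hGu)]
  refine cfc_congr fun t _ => ?_
  split_ifs with h
  · rw [one_mul]
  · rw [zero_mul, Real.sqrt_eq_zero'.mpr (not_lt.mp h)]

lemma reApplyInnerSelf_nonneg_of_posSpectralProj_apply (hG : IsSelfAdjoint G) (hGu : IsUnit G)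
    {w : H} (hw : posSpectralProj G w = w) : 0 ≤ G.reApplyInnerSelf w := by
  have hGP : 0 ≤ G * posSpectralProj G := by
    nth_rewrite 1 [← cfc_id' ℝ G hG]
    rw [posSpectralProj,
      ← cfc_mul (fun t : ℝ => t) _ G continuousOn_id (continuousOn_ite_pos_spectrum hGu)]
    refine cfc_nonneg fun t _ => ?_
    split_ifs with h
    · simpa using h.le
    · simp
  have h := ((nonneg_iff_isPositive _).mp hGP).re_inner_nonneg_left w
  rwa [mul_apply_eq_comp, hw] at h

lemma reApplyInnerSelf_cfc_sqrt_nonneg {S : H →L[ℂ] H} (hS : IsSelfAdjoint S)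
    (hG : IsSelfAdjoint G) (hSG : Commute S G) (hGu : IsUnit G)
    (hneg : ∀ m < 0, ∀ w : ℕ → H, IsApproxEigenseq S m w →
      ∃ᶠ n in atTop, G.reApplyInnerSelf (w n) < 0) (u : H) :
    0 ≤ S.reApplyInnerSelf (cfc Real.sqrt G u) := by
  by_contra! h
  have hx : posSpectralProj G (cfc Real.sqrt G u) = cfc Real.sqrt G u := by
    rw [← mul_apply_eq_comp, posSpectralProj_mul_cfc_sqrt hGu]
  obtain ⟨m, hm, w, hw, hPw⟩ := exists_isApproxEigenseq_neg hS
    (isStarProjection_posSpectralProj hGu) (hSG.symm.cfc_real _).symm hx h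
  obtain ⟨n, hn⟩ := (hneg m hm w hw).exists
  exact hn.not_ge (reApplyInnerSelf_nonneg_of_posSpectralProj_apply hG hGu (hPw n))

end SpectralProjection

-- `Real.sqrt` vanishes on `(-∞, 0]`, so the two square roots are `√G⁺` and `√G⁻`.
lemma cfc_sqrt_mul_self_sub_cfc_sqrt_neg_mul_self {G : H →L[ℂ] H} (hG : IsSelfAdjoint G) :
    cfc Real.sqrt G * cfc Real.sqrt G - cfc Real.sqrt (-G) * cfc Real.sqrt (-G) = G := by
  rw [← cfc_comp_neg Real.sqrt G, ← cfc_mul _ _ G, ← cfc_mul _ _ G, ← cfc_sub _ _ G]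
  nth_rewrite 2 [← cfc_id' ℝ G hG]
  refine cfc_congr fun t _ => ?_
  rcases le_total 0 t with h | h
  · simp [Real.mul_self_sqrt h, Real.sqrt_eq_zero'.mpr (neg_nonpos.mpr h)]
  · simp [Real.sqrt_eq_zero'.mpr h, Real.mul_self_sqrt (neg_nonneg.mpr h)]

lemma reApplyInnerSelf_mul_self_mul {R S : H →L[ℂ] H} (hR : IsSelfAdjoint R) (hRS : Commute R S)
    (u : H) : (R * R * S).reApplyInnerSelf u = S.reApplyInnerSelf (R u) := by
  rw [mul_assoc, hRS.eq, ← mul_assoc]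
  nth_rewrite 1 [← hR.star_eq]
  exact reApplyInnerSelf_star_mul_mul S R u

lemma reApplyInnerSelf_mul_nonneg {S G : H →L[ℂ] H} (hS : IsSelfAdjoint S) (hG : IsSelfAdjoint G)
    (hSG : Commute S G) (hGu : IsUnit G)
    (hneg : ∀ m < 0, ∀ w : ℕ → H, IsApproxEigenseq S m w →
      ∃ᶠ n in atTop, G.reApplyInnerSelf (w n) < 0)
    (hpos : ∀ m > 0, ∀ w : ℕ → H, IsApproxEigenseq S m w →
      ∃ᶠ n in atTop, 0 < G.reApplyInnerSelf (w n)) (u : H) :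
    0 ≤ (G * S).reApplyInnerSelf u := by
  have hsqrtG := reApplyInnerSelf_cfc_sqrt_nonneg hS hG hSG hGu hneg u
  have hsqrtNegG := reApplyInnerSelf_cfc_sqrt_nonneg hS.neg hG.neg hSG.neg_left.neg_right hGu.neg
    (fun m hm w hw => (hpos (-m) (neg_pos.mpr hm) w (isApproxEigenseq_neg_iff.mp hw)).mono
      fun n hn => by rwa [reApplyInnerSelf_neg, neg_lt_zero]) u
  rw [reApplyInnerSelf_neg] at hsqrtNegG
  rw [← cfc_sqrt_mul_self_sub_cfc_sqrt_neg_mul_self hG, sub_mul, reApplyInnerSelf_sub,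
    reApplyInnerSelf_mul_self_mul (cfc_predicate _ _) (hSG.symm.cfc_real _),
    reApplyInnerSelf_mul_self_mul (cfc_predicate _ _) (hSG.symm.neg_left.cfc_real _)]
  linarith

section Gram

variable {J A W Winv : H →L[ℂ] H}

lemma PosType.eventually_gram_pos (hWV : W ∘L Winv = 1) (hVW : Winv ∘L W = 1) {μ : ℝ}
    (h : PosType J A μ) {w : ℕ → H} (hw : IsApproxEigenseq (W ∘L A ∘L Winv) μ w) :
    ∀ᶠ n in atTop, 0 < (star Winv * J * Winv).reApplyInnerSelf (w n) := by
  filter_upwards [h.eventually_pos (hw.of_conj hWV hVW)] with n hn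
  rw [reApplyInnerSelf_smul] at hn
  rw [reApplyInnerSelf_star_mul_mul]
  exact pos_of_mul_pos_right hn (sq_nonneg _)

lemma NegType.eventually_gram_neg (hWV : W ∘L Winv = 1) (hVW : Winv ∘L W = 1) {μ : ℝ}
    (h : NegType J A μ) {w : ℕ → H} (hw : IsApproxEigenseq (W ∘L A ∘L Winv) μ w) :
    ∀ᶠ n in atTop, (star Winv * J * Winv).reApplyInnerSelf (w n) < 0 := by
  filter_upwards [h.eventually_neg (hw.of_conj hWV hVW)] with n hn
  rw [reApplyInnerSelf_smul] at hn
  rw [reApplyInnerSelf_star_mul_mul]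
  exact neg_of_mul_neg_right hn (sq_nonneg _)

lemma IsKSA.mul_eq_star_mul (hA : IsKSA J A) : J * A = star A * J := by
  refine ContinuousLinearMap.ext fun x => ext_inner_right ℂ fun y => ?_
  rw [mul_apply_eq_comp, mul_apply_eq_comp, star_eq_adjoint, adjoint_inner_left]
  exact hA x y

lemma commute_gram (hA : IsKSA J A) (hVW : Winv ∘L W = 1)
    (hS : IsSelfAdjoint (W ∘L A ∘L Winv)) :
    Commute (W ∘L A ∘L Winv) (star Winv * J * Winv) := by
  have hVW' : Winv * W = 1 := hVW
  have hS' : W ∘L A ∘L Winv = star Winv * star A * star W := by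
    conv_lhs => rw [← hS.star_eq]
    change star (W * (A * Winv)) = _
    simp only [star_mul, mul_assoc]
  change W ∘L A ∘L Winv * (star Winv * J * Winv) = star Winv * J * Winv * (W * (A * Winv))
  calc W ∘L A ∘L Winv * (star Winv * J * Winv)
      = star Winv * star A * (star W * star Winv) * J * Winv := by
        rw [hS']; simp only [mul_assoc]
    _ = star Winv * (star A * J) * Winv := by
        rw [← star_mul Winv W, hVW', star_one]; simp only [mul_one, mul_assoc]
    _ = star Winv * J * (Winv * W) * A * Winv := by
        rw [← hA.mul_eq_star_mul, hVW']; simp only [mul_one, mul_assoc]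
    _ = star Winv * J * Winv * (W * (A * Winv)) := by simp only [mul_assoc]

lemma isUnit_gram (hJ2 : J ∘L J = 1) (hWV : W ∘L Winv = 1) (hVW : Winv ∘L W = 1) :
    IsUnit (star Winv * J * Winv) :=
  have hV : IsUnit Winv := ⟨⟨Winv, W, hVW, hWV⟩, rfl⟩
  (hV.star.mul ⟨⟨J, J, hJ2, hJ2⟩, rfl⟩).mul hV

lemma reApplyInnerSelf_gram_mul_apply (hVW : Winv ∘L W = 1) (f : H) :
    (star Winv * J * Winv * (W ∘L A ∘L Winv)).reApplyInnerSelf (W f) = (kip J (A f) f).re := by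
  have hVW' (x : H) : Winv (W x) = x := congr($hVW x)
  simp only [reApplyInnerSelf_apply, mul_apply_eq_comp, comp_apply, hVW', star_eq_adjoint,
    adjoint_inner_left, kip, RCLike.re_to_complex]

lemma IsSelfAdjoint.apply_apply_eq_zero_iff {S : H →L[ℂ] H} (hS : IsSelfAdjoint S) (x : H) :
    S (S x) = 0 ↔ S x = 0 := by
  refine ⟨fun h => ?_, fun h => by rw [h, map_zero]⟩
  have hadj : adjoint S = S := by rw [← star_eq_adjoint, hS.star_eq]
  rw [← inner_self_eq_zero (𝕜 := ℂ), ← adjoint_inner_right, hadj, h, inner_zero_right]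

lemma apply_apply_eq_zero_iff_of_conj (hWV : W ∘L Winv = 1) (hVW : Winv ∘L W = 1)
    (hS : IsSelfAdjoint (W ∘L A ∘L Winv)) (f : H) : A (A f) = 0 ↔ A f = 0 := by
  have hWV' (x : H) : W (Winv x) = x := congr($hWV x)
  have hVW' (x : H) : Winv (W x) = x := congr($hVW x)
  have hA (x : H) : A x = Winv ((W ∘L A ∘L Winv) (W x)) := by simp only [comp_apply, hVW']
  have hinj : Function.Injective Winv := fun x y hxy => by simpa [hWV'] using congr(W $hxy)
  rw [hA (A f), hA f, hWV', map_eq_zero_iff _ hinj, map_eq_zero_iff _ hinj]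
  exact hS.apply_apply_eq_zero_iff _

end Gram

theorem stmt7 (J A : H →L[ℂ] H) (hJsa : IsSelfAdjoint J) (hJ2 : J ∘L J = 1)
    (hA : IsKSA J A)
    (htype : (∀ lam : ℝ, 0 < lam → PosType J A lam) ∧
      (∀ lam : ℝ, lam < 0 → NegType J A lam))
    (hsim : ∃ W Winv : H →L[ℂ] H, W ∘L Winv = 1 ∧ Winv ∘L W = 1 ∧
      IsSelfAdjoint (W ∘L A ∘L Winv)) :
    (∀ f : H, 0 ≤ (kip J (A f) f).re) ∧ (∀ f : H, A (A f) = 0 ↔ A f = 0) := by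
  obtain ⟨W, Winv, hWV, hVW, hS⟩ := hsim
  refine ⟨fun f => ?_, apply_apply_eq_zero_iff_of_conj hWV hVW hS⟩
  rw [← reApplyInnerSelf_gram_mul_apply hVW]
  exact reApplyInnerSelf_mul_nonneg hS (hJsa.conjugate' Winv) (commute_gram hA hVW hS)
    (isUnit_gram hJ2 hWV hVW)
    (fun m hm w hw => ((htype.2 m hm).eventually_gram_neg hWV hVW hw).frequently)
    (fun m hm w hw => ((htype.1 m hm).eventually_gram_pos hWV hVW hw).frequently) (W f)
end
end

section
/- Let A be a bounded Krein-self-adjoint operator on H and let E be a bounded projection on H (E ∘ E = E) with [E f, g] = [f, E g] for all f, g ∈ H and A ∘ E = E ∘ A, such that [A f, f] ≥ 0 for every f ∈ ran E. Then there exists γ ∈ ℝ such that [A f, f] ≥ γ ‖f‖² for all f ∈ H, i.e., A is semibounded from below with respect to the indefinite inner product. -/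
/-! A `[·,·]`-symmetric projection `E` splits `H` into the `[·,·]`-orthogonal sum
`ran E ⊕ ran (1 - E)`, and an operator `A` commuting with `E` respects the splitting, so
`[Af, f] = [AEf, Ef] + [A(1-E)f, (1-E)f]`. The first summand is nonnegative by hypothesis and
the second is bounded below by `-‖J‖ ‖A‖ ‖1 - E‖² ‖f‖²`. -/

open Filter Topology

noncomputable section

variable {H : Type*} [NormedAddCommGroup H] [InnerProductSpace ℂ H] [CompleteSpace H]

open ContinuousLinearMap

section KreinSpace

variable {V : Type*} [NormedAddCommGroup V] [InnerProductSpace ℂ V]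

theorem kip_add_left (J : V →L[ℂ] V) (f₁ f₂ g : V) :
    kip J (f₁ + f₂) g = kip J f₁ g + kip J f₂ g := by
  rw [kip, map_add, inner_add_left, kip, kip]

theorem kip_add_right (J : V →L[ℂ] V) (f g₁ g₂ : V) :
    kip J f (g₁ + g₂) = kip J f g₁ + kip J f g₂ :=
  inner_add_right _ _ _

theorem neg_mul_sq_le_re_kip (J T : V →L[ℂ] V) (f : V) :
    -(‖J‖ * ‖T‖ * ‖f‖ ^ 2) ≤ (kip J (T f) f).re := by
  have hnorm : ‖kip J (T f) f‖ ≤ ‖J‖ * ‖T‖ * ‖f‖ ^ 2 :=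
    calc ‖kip J (T f) f‖ ≤ ‖J (T f)‖ * ‖f‖ := norm_inner_le_norm _ _
      _ ≤ ‖J‖ * (‖T‖ * ‖f‖) * ‖f‖ := by
        gcongr
        exact J.le_opNorm_of_le (T.le_opNorm f)
      _ = ‖J‖ * ‖T‖ * ‖f‖ ^ 2 := by ring
  linarith [neg_abs_le (kip J (T f) f).re, Complex.abs_re_le_norm (kip J (T f) f)]

variable {J E : V →L[ℂ] V}

theorem apply_one_sub_apply_of_comp_self (hE : E ∘L E = E) (g : V) : E ((1 - E) g) = 0 := by
  rw [sub_apply, one_apply_eq_self, map_sub, ← comp_apply, hE, sub_self]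

theorem one_sub_apply_apply_of_comp_self (hE : E ∘L E = E) (g : V) : (1 - E) (E g) = 0 := by
  rw [sub_apply, one_apply_eq_self, ← comp_apply, hE, sub_self]

theorem kip_apply_one_sub_apply_eq_zero (hE : E ∘L E = E)
    (hEsym : ∀ f g : V, kip J (E f) g = kip J f (E g)) (f g : V) :
    kip J (E f) ((1 - E) g) = 0 := by
  rw [hEsym, apply_one_sub_apply_of_comp_self hE, kip, inner_zero_right]

theorem kip_one_sub_apply_apply_eq_zero (hE : E ∘L E = E)
    (hEsym : ∀ f g : V, kip J (E f) g = kip J f (E g)) (f g : V) :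
    kip J ((1 - E) g) (E f) = 0 := by
  rw [← hEsym, apply_one_sub_apply_of_comp_self hE, kip, map_zero, inner_zero_left]

theorem kip_apply_self_eq_add_of_comm (hE : E ∘L E = E)
    (hEsym : ∀ f g : V, kip J (E f) g = kip J f (E g)) {A : V →L[ℂ] V}
    (hcomm : A ∘L E = E ∘L A) (f : V) :
    kip J (A f) f = kip J (A (E f)) (E f) + kip J (A ((1 - E) f)) ((1 - E) f) := by
  have hsplit : ∀ g : V, g = E g + (1 - E) g := fun g => by simp
  have hAE : A (E f) = E (A f) := by rw [← comp_apply, hcomm, comp_apply]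
  have hAF : A ((1 - E) f) = (1 - E) (A f) := by
    rw [sub_apply, one_apply_eq_self, map_sub, hAE, sub_apply, one_apply_eq_self]
  have hcross₁ := kip_apply_one_sub_apply_eq_zero hE hEsym (A f) f
  have hcross₂ := kip_one_sub_apply_apply_eq_zero hE hEsym f (A f)
  calc kip J (A f) f = kip J (E (A f) + (1 - E) (A f)) (E f + (1 - E) f) := by
        rw [← hsplit, ← hsplit]
    _ = kip J (E (A f)) (E f) + kip J ((1 - E) (A f)) ((1 - E) f) := by
        simp only [kip_add_left, kip_add_right, hcross₁, hcross₂, add_zero, zero_add]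
    _ = _ := by rw [hAE, hAF]

end KreinSpace

theorem stmt8_general (J A E : H →L[ℂ] H)
    (hE : E ∘L E = E) (hEsym : ∀ f g : H, kip J (E f) g = kip J f (E g))
    (hcomm : A ∘L E = E ∘L A)
    (hnnE : ∀ f ∈ LinearMap.range (E : H →ₗ[ℂ] H), 0 ≤ (kip J (A f) f).re) :
    ∃ γ : ℝ, ∀ f : H, γ * ‖f‖ ^ 2 ≤ (kip J (A f) f).re := by
  refine ⟨-(‖J‖ * ‖A‖ * ‖1 - E‖ ^ 2), fun f => ?_⟩
  have hran : 0 ≤ (kip J (A (E f)) (E f)).re := hnnE (E f) ⟨f, rfl⟩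
  have hcompl := neg_mul_sq_le_re_kip J A ((1 - E) f)
  have hnorm : ‖(1 - E) f‖ ^ 2 ≤ (‖1 - E‖ * ‖f‖) ^ 2 := by
    gcongr
    exact (1 - E).le_opNorm f
  rw [kip_apply_self_eq_add_of_comm hE hEsym hcomm, Complex.add_re]
  nlinarith [mul_le_mul_of_nonneg_left hnorm (by positivity : 0 ≤ ‖J‖ * ‖A‖)]

theorem stmt8 (J A E : H →L[ℂ] H) (hJsa : IsSelfAdjoint J) (hJ2 : J ∘L J = 1)
    (hA : IsKSA J A)
    (hE : E ∘L E = E) (hEsym : ∀ f g : H, kip J (E f) g = kip J f (E g))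
    (hcomm : A ∘L E = E ∘L A)
    (hnnE : ∀ f ∈ LinearMap.range (E : H →ₗ[ℂ] H), 0 ≤ (kip J (A f) f).re) :
    ∃ γ : ℝ, ∀ f : H, γ * ‖f‖ ^ 2 ≤ (kip J (A f) f).re :=
  stmt8_general J A E hE hEsym hcomm hnnE
end
end

section
/- Let E be a bounded projection on H (E ∘ E = E) with [E f, g] = [f, E g] for all f, g ∈ H. Then there exists a fundamental symmetry J' of the Krein space (H,[·,·]) with J' ∘ E = E ∘ J'. -/
open Filter Topology

noncomputable section

variable {H : Type*} [NormedAddCommGroup H] [InnerProductSpace ℂ H] [CompleteSpace H]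

/-!
Let `K = 2E - 1`, the reflection belonging to `E`; it is an involution and `J`-self-adjoint,
i.e. `JK` is self-adjoint. Then `JK` is invertible with inverse `KJ = J (JK) J`, so conjugating
the modulus `|JK|` by the unitary `J` gives `|KJ| = |JK|⁻¹`. Hence `J' = J |JK|` is an
involution, `[J' f, f] = ⟨|JK| f, f⟩ > 0` because `|JK|` is positive and invertible, and `J'`
commutes with `K` (hence with `E`) because `|JK|` commutes with `JK`.
-/

namespace CFC

variable {A : Type*} [CStarAlgebra A] [PartialOrder A] [StarOrderedRing A]

lemma abs_unitary_conj {u : A} (hu : u ∈ unitary A) (a : A) :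
    abs (u * a * star u) = u * abs a * star u := by
  refine sqrt_unique ?_ (star_right_conjugate_nonneg (abs_nonneg a) u)
  have hu' := Unitary.star_mul_self_of_mem hu
  calc u * abs a * star u * (u * abs a * star u) = u * (abs a * abs a) * star u := by
        simp only [mul_assoc, ← mul_assoc (star u) u, hu', one_mul]
    _ = star (u * a * star u) * (u * a * star u) := by
        simp only [abs_mul_abs, star_mul, star_star, mul_assoc, ← mul_assoc (star u) u, hu',
          one_mul]

lemma abs_mul_abs_eq_one {a b : A} (hb : IsSelfAdjoint b) (hab : a * b = 1) (hba : b * a = 1) :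
    abs a * abs b = 1 := by
  have hcomm : Commute a b := hab.trans hba.symm
  rw [← hcomm.cfcAbs_mul_eq (hb.star_eq.symm ▸ hcomm), hab, abs_one]

section Involution

variable {j k : A}

lemma mul_abs_mul_mul_eq_abs_mul_swap (hj : IsSelfAdjoint j) (hj2 : j * j = 1) :
    j * abs (j * k) * j = abs (k * j) := by
  have hu : j ∈ unitary A := by simp [Unitary.mem_iff, hj.star_eq, hj2]
  simpa [hj.star_eq, ← mul_assoc, hj2] using (abs_unitary_conj hu (j * k)).symm

lemma abs_mul_swap_mul_abs_mul_eq_one (hj2 : j * j = 1) (hk2 : k * k = 1)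
    (hjk : IsSelfAdjoint (j * k)) : abs (k * j) * abs (j * k) = 1 :=
  abs_mul_abs_eq_one hjk (by simp [mul_assoc, ← mul_assoc j j, hj2, hk2])
    (by simp [mul_assoc, ← mul_assoc k k, hj2, hk2])

theorem mul_abs_mul_mul_self_eq_one (hj : IsSelfAdjoint j) (hj2 : j * j = 1) (hk2 : k * k = 1)
    (hjk : IsSelfAdjoint (j * k)) : j * abs (j * k) * (j * abs (j * k)) = 1 := by
  rw [← mul_assoc, mul_abs_mul_mul_eq_abs_mul_swap hj hj2,
    abs_mul_swap_mul_abs_mul_eq_one hj2 hk2 hjk]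

theorem commute_mul_abs_mul (hj : IsSelfAdjoint j) (hj2 : j * j = 1) (hk2 : k * k = 1)
    (hjk : IsSelfAdjoint (j * k)) : Commute (j * abs (j * k)) k := by
  have hkj : IsSelfAdjoint (k * j) := by
    simpa [hj.star_eq, ← mul_assoc, hj2] using hjk.conjugate' j
  have hjk_kj : Commute (j * k) (k * j) := by
    simp [Commute, SemiconjBy, mul_assoc, ← mul_assoc j j, ← mul_assoc k k, hj2, hk2]
  have habs : Commute (abs (j * k)) (k * j) := hjk_kj.cfcAbs_left (hkj.star_eq.symm ▸ hjk_kj)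
  calc j * abs (j * k) * k = abs (k * j) * (j * k) := by
        rw [← mul_abs_mul_mul_eq_abs_mul_swap hj hj2]
        simp [mul_assoc, ← mul_assoc j j, hj2]
    _ = abs (k * j) * (abs (j * k) * abs (j * k)) * (k * j) := by
        rw [abs_mul_abs, hjk.star_eq]
        simp [mul_assoc, ← mul_assoc k k, hj2, hk2]
    _ = k * (j * abs (j * k)) := by
        rw [← mul_assoc (abs (k * j)), abs_mul_swap_mul_abs_mul_eq_one hj2 hk2 hjk, one_mul,
          habs.eq, mul_assoc]

end Involution

end CFC

lemma IsIdempotentElem.two_smul_sub_one_mul_self {𝕜 R : Type*} [CommRing 𝕜] [Ring R]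
    [Algebra 𝕜 R] {e : R} (he : IsIdempotentElem e) :
    ((2 : 𝕜) • e - 1) * ((2 : 𝕜) • e - 1) = 1 := by
  simp only [sub_mul, mul_sub, smul_mul_assoc, mul_smul_comm, one_mul, mul_one, he.eq]
  module

lemma isKSA_iff_isSelfAdjoint_mul {J : H →L[ℂ] H} (hJ : IsSelfAdjoint J) (X : H →L[ℂ] H) :
    IsKSA J X ↔ IsSelfAdjoint (J * X) := by
  rw [ContinuousLinearMap.isSelfAdjoint_iff_isSymmetric]
  refine forall₂_congr fun f g => ?_
  rw [kip, kip, ← ContinuousLinearMap.adjoint_inner_right J f (X g), hJ.adjoint_eq]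
  rfl

lemma ContinuousLinearMap.re_inner_pos_of_nonneg_of_injective {S : H →L[ℂ] H} (hS : 0 ≤ S)
    (hinj : Function.Injective S) {f : H} (hf : f ≠ 0) : 0 < RCLike.re (inner ℂ (S f) f) := by
  have hRR : CFC.sqrt S * CFC.sqrt S = S := CFC.sqrt_mul_sqrt_self S
  have hR : IsSelfAdjoint (CFC.sqrt S) := (CFC.sqrt_nonneg S).isSelfAdjoint
  set R := CFC.sqrt S
  have hRf : R f ≠ 0 := fun h0 => hf <| hinj <| by
    rw [map_zero, ← hRR]
    exact (congrArg R h0).trans (map_zero R)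
  have hSf : inner ℂ (S f) f = inner ℂ (R f) (R f) := by
    rw [← hRR]
    exact hR.isSymmetric (R f) f
  rw [hSf, inner_self_eq_norm_sq_to_K]
  exact_mod_cast pow_pos (norm_pos_iff.2 hRf) 2

theorem stmt15 (J E : H →L[ℂ] H) (hJsa : IsSelfAdjoint J) (hJ2 : J ∘L J = 1)
    (hE : E ∘L E = E) (hEsym : ∀ f g : H, kip J (E f) g = kip J f (E g)) :
    ∃ J' : H →L[ℂ] H, J' ∘L J' = 1 ∧
      (∀ f g : H, kip J (J' f) g = kip J f (J' g)) ∧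
      (∀ f : H, f ≠ 0 → 0 < (kip J (J' f) f).re) ∧
      J' ∘L E = E ∘L J' := by
  have hJJ : J * J = 1 := hJ2
  set K : H →L[ℂ] H := (2 : ℂ) • E - 1
  have hK2 : K * K = 1 := IsIdempotentElem.two_smul_sub_one_mul_self hE
  have hJK : IsSelfAdjoint (J * K) := by
    have hJE := (isKSA_iff_isSelfAdjoint_mul hJsa E).1 hEsym
    have hJK_eq : J * K = J * E + J * E - J := by
      simp only [K, two_smul, mul_sub, mul_add, mul_one]
    rw [hJK_eq]
    exact (hJE.add hJE).sub hJsa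
  have hE_eq : E = (2 : ℂ)⁻¹ • (K + 1) := by simp [K, smul_smul]
  set S := CFC.abs (J * K)
  have hS_inj : Function.Injective S := Function.LeftInverse.injective (g := ⇑(CFC.abs (K * J)))
    fun x => by
      rw [← mul_apply_eq_comp (CFC.abs (K * J)) S x,
        CFC.abs_mul_swap_mul_abs_mul_eq_one hJJ hK2 hJK, one_apply_eq_self]
  refine ⟨J * S, CFC.mul_abs_mul_mul_self_eq_one hJsa hJJ hK2 hJK, ?_, fun f hf => ?_, ?_⟩
  · refine (isKSA_iff_isSelfAdjoint_mul hJsa _).2 ?_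
    rw [← mul_assoc, hJJ, one_mul]
    exact (CFC.abs_nonneg _).isSelfAdjoint
  · have hJJS : J (J (S f)) = S f := by
      rw [← mul_apply_eq_comp J J (S f), hJJ, one_apply_eq_self]
    simp only [kip, mul_apply_eq_comp, hJJS]
    exact ContinuousLinearMap.re_inner_pos_of_nonneg_of_injective (CFC.abs_nonneg (J * K)) hS_inj hf
  · have hcomm := (CFC.commute_mul_abs_mul hJsa hJJ hK2 hJK).add_right (Commute.one_right _)
    rw [hE_eq]
    exact (hcomm.smul_right _).eq
end
end
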